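/- For all natural numbers r and k, there exists a natural number M such that for every coloring f of the 2-element subsets of {0, 1, …, M} into r colors, there is a nonempty subset Y of {0, 1, …, M} such that f is constant on the 2-element subsets of Y and the cardinality of Y is at least min(Y) + k − 1. -/

import Mathlib

/-!
By compactness it suffices to treat colorings of all pairs of `ℕ`: if every `M` had a bad
coloring, a nonprincipal ultrafilter on `M` would assemble them into one coloring of all pairs
of `ℕ` that, on any finite set, agrees with some bad coloring. By the infinite Ramsey theorem
that coloring has an infinite homogeneous set `H`, and `H` contains finite sets `Y` that are as
large as we like relative to their minimum, which contradicts the badness of the coloring it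
agrees with on `Y`.
-/

open Set Filter

theorem Set.Infinite.exists_infinite_fiber {α β : Type*} {s : Set α} {t : Set β} {f : α → β}
    (hs : s.Infinite) (ht : t.Finite) (hf : MapsTo f s t) :
    ∃ b ∈ t, (s ∩ f ⁻¹' {b}).Infinite := by
  by_contra! h
  exact hs ((ht.biUnion h).subset fun a ha => mem_biUnion (hf ha) ⟨ha, rfl⟩)

theorem Set.Infinite.exists_finset_min_add_le_card {H : Set ℕ} (hH : H.Infinite) (k : ℕ) :
    ∃ Y : Finset ℕ, ↑Y ⊆ H ∧ ∃ hY : Y.Nonempty, Y.min' hY + k ≤ Y.card := by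
  have hmin : sInf H ∈ H := Nat.sInf_mem hH.nonempty
  obtain ⟨t, htH, ht⟩ := hH.exists_subset_card_eq (sInf H + k)
  have hYH : ↑(insert (sInf H) t) ⊆ H := by
    rw [Finset.coe_insert]; exact insert_subset hmin htH
  have hY : (insert (sInf H) t).Nonempty := Finset.insert_nonempty _ _
  refine ⟨insert (sInf H) t, hYH, hY, ?_⟩
  have hYmin : (insert (sInf H) t).min' hY = sInf H :=
    le_antisymm (Finset.min'_le _ _ (Finset.mem_insert_self _ _))
      (Finset.le_min' _ _ _ fun y hy => Nat.sInf_le (hYH hy))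
  rw [hYmin, ← ht]
  exact Finset.card_le_card (Finset.subset_insert _ _)

section Ramsey

variable {r : ℕ} {c : ℕ → ℕ → ℕ}

theorem exists_infinite_subset_color_eq (hc : ∀ a b, a < b → c a b < r) {S : Set ℕ}
    (hS : S.Infinite) (a : ℕ) :
    ∃ j < r, ∃ T ⊆ S, T.Infinite ∧ ∀ y ∈ T, a < y ∧ c a y = j := by
  obtain ⟨j, hj, hT⟩ := (hS.sdiff (finite_Iic a)).exists_infinite_fiber (finite_Iio r)
    fun y hy => hc a y (not_le.1 hy.2)
  exact ⟨j, hj, _, fun y hy => hy.1.1, hT, fun y hy => ⟨not_le.1 hy.1.2, hy.2⟩⟩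

theorem exists_infinite_homogeneous_of_lt (hc : ∀ a b, a < b → c a b < r) :
    ∃ H : Set ℕ, H.Infinite ∧ ∃ j, ∀ a ∈ H, ∀ b ∈ H, a < b → c a b = j := by
  choose! color hcolor next hnext_sub hnext_inf hnext using
    fun (S : Set ℕ) (hS : S.Infinite) => exists_infinite_subset_color_eq hc hS (sInf S)
  -- `seq (n + 1)` keeps only points joined to `x n := sInf (seq n)` in one color, so `x n`
  -- sees every later `x m` in that color; pigeonhole on these colors finishes.
  let seq : ℕ → Set ℕ := fun n => next^[n] univ
  have seq_succ : ∀ n, seq (n + 1) = next (seq n) := fun n => Function.iterate_succ_apply' _ _ _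
  have seq_infinite : ∀ n, (seq n).Infinite := by
    intro n
    induction n with
    | zero => exact infinite_univ
    | succ n ih => rw [seq_succ]; exact hnext_inf _ ih
  have seq_anti : Antitone seq := antitone_nat_of_succ_le fun n => by
    rw [seq_succ]; exact hnext_sub _ (seq_infinite n)
  let x : ℕ → ℕ := fun n => sInf (seq n)
  have hx : ∀ m n, m < n → x m < x n ∧ c (x m) (x n) = color (seq m) := fun m n hmn =>
    hnext _ (seq_infinite m) (x n)
      (seq_succ m ▸ seq_anti hmn (Nat.sInf_mem (seq_infinite n).nonempty))
  have x_mono : StrictMono x := fun m n h => (hx m n h).1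
  obtain ⟨j, -, hj⟩ := infinite_univ.exists_infinite_fiber (finite_Iio r)
    fun n _ => hcolor _ (seq_infinite n)
  refine ⟨x '' (univ ∩ (fun n => color (seq n)) ⁻¹' {j}),
    hj.image x_mono.injective.injOn, j, ?_⟩
  rintro _ ⟨m, ⟨-, hm⟩, rfl⟩ _ ⟨n, -, rfl⟩ hmn
  exact (hx m n (x_mono.lt_iff_lt.1 hmn)).2.trans hm

end Ramsey

theorem exists_infinite_homogeneous_pairs {r : ℕ} (g : Finset ℕ → ℕ)
    (hg : ∀ s : Finset ℕ, s.card = 2 → g s < r) :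
    ∃ H : Set ℕ, H.Infinite ∧ ∃ j, ∀ s : Finset ℕ, ↑s ⊆ H → s.card = 2 → g s = j := by
  obtain ⟨H, hH, j, hHj⟩ := exists_infinite_homogeneous_of_lt (c := fun a b => g {a, b})
    fun a b hab => hg _ (Finset.card_pair hab.ne)
  refine ⟨H, hH, j, fun s hsH hs => ?_⟩
  obtain ⟨a, b, hab, rfl⟩ := Finset.card_eq_two.1 hs
  have ha : a ∈ H := hsH (by simp)
  have hb : b ∈ H := hsH (by simp)
  rcases hab.lt_or_gt with h | h
  · exact hHj a ha b hb h
  · rw [Finset.pair_comm]; exact hHj b hb a ha h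

theorem exists_limit_coloring {n r : ℕ} (F : ℕ → Finset ℕ → ℕ)
    (hF : ∀ M, ∀ s : Finset ℕ, s ⊆ Finset.range (M + 1) → s.card = n → F M s < r) :
    ∃ g : Finset ℕ → ℕ, (∀ s : Finset ℕ, s.card = n → g s < r) ∧
      ∀ Y : Finset ℕ, ∃ M, Y ⊆ Finset.range (M + 1) ∧
        ∀ s ⊆ Y, s.card = n → F M s = g s := by
  let U := hyperfilter ℕ
  have eventually_subset_range : ∀ Y : Finset ℕ, ∀ᶠ M in U, Y ⊆ Finset.range (M + 1) :=
    fun Y => Nat.hyperfilter_le_atTop <|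
      (Y.eventually_all.2 fun y _ => eventually_ge_atTop y).mono
        fun M hM y hy => Finset.mem_range_succ_iff.2 (hM y hy)
  have limit : ∀ s : Finset ℕ, s.card = n → ∃ v ∈ Iio r, ∀ᶠ M in U, F M s = v := fun s hs =>
    (Ultrafilter.eventually_exists_mem_iff (finite_Iio r)).1 <|
      (eventually_subset_range s).mono fun M hM => ⟨_, hF M s hM hs, rfl⟩
  choose! g hg_lt hg_eq using limit
  refine ⟨g, hg_lt, fun Y => ?_⟩
  obtain ⟨M, hYM, hM⟩ := ((eventually_subset_range Y).and <|
    (Y.powersetCard n).eventually_all.2 fun s hs =>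
      hg_eq s (Finset.mem_powersetCard.1 hs).2).exists
  exact ⟨M, hYM, fun s hs hsn => hM s (Finset.mem_powersetCard.2 ⟨hs, hsn⟩)⟩

/-- **Paris–Harrington theorem for pairs (PH²).** For all natural numbers `r`, `k`,
there exists `M` such that every coloring `f` of the 2-element subsets of
`{0, 1, …, M}` into `r` colors admits a nonempty `f`-homogeneous subset `Y` of
`{0, 1, …, M}` whose cardinality is at least `min Y + k - 1`. -/
theorem paris_harrington_pairs (r k : ℕ) :
    ∃ M : ℕ, ∀ f : Finset ℕ → ℕ,
      (∀ s : Finset ℕ, s ⊆ Finset.range (M + 1) → s.card = 2 → f s < r) →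
      ∃ Y : Finset ℕ, Y ⊆ Finset.range (M + 1) ∧ ∃ hY : Y.Nonempty,
        (∀ s t : Finset ℕ, s ⊆ Y → t ⊆ Y → s.card = 2 → t.card = 2 → f s = f t) ∧
        Y.card + 1 ≥ Y.min' hY + k := by
  by_contra! hbad
  choose F hF_lt hF_bad using hbad
  obtain ⟨g, hg_lt, hg_limit⟩ := exists_limit_coloring F hF_lt
  obtain ⟨H, hH, j, hHj⟩ := exists_infinite_homogeneous_pairs g hg_lt
  obtain ⟨Y, hYH, hY, hYcard⟩ := hH.exists_finset_min_add_le_card k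
  obtain ⟨M, hYM, hFg⟩ := hg_limit Y
  have hom : ∀ s ⊆ Y, s.card = 2 → F M s = j := fun s hs hs2 =>
    (hFg s hs hs2).trans (hHj s ((Finset.coe_subset.2 hs).trans hYH) hs2)
  have hsmall := hF_bad M Y hYM hY fun s t hs ht hs2 ht2 =>
    (hom s hs hs2).trans (hom t ht ht2).symm
  omega
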